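/- For every Veltman frame F and every k ≥ 0: F satisfies the frame condition F_{2k} if and only if F validates the schema R̃_k = X_k → (Y_k ▷ Z_k) under all valuations (where the propositional letters in R̃_k range over variables). -/
import Mathlib


/-- Formulas of interpretability logic: propositional variables, ⊥, →, □, ▷. -/
inductive ILForm : Type
  | var : ℕ → ILForm
  | bot : ILForm
  | impl : ILForm → ILForm → ILForm
  | box : ILForm → ILForm
  | rhd : ILForm → ILForm → ILForm
  deriving DecidableEq

namespace ILForm

def neg (A : ILForm) : ILForm := impl A bot
def top : ILForm := neg bot
def conj (A B : ILForm) : ILForm := neg (impl A (neg B))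
def disj (A B : ILForm) : ILForm := impl (neg A) B
def dia (A : ILForm) : ILForm := neg (box (neg A))

end ILForm

infixr:30 " ⟹ " => ILForm.impl
infixl:65 " ⋀ " => ILForm.conj
infixl:64 " ⋁ " => ILForm.disj
infix:50 " ▷ " => ILForm.rhd
prefix:70 "□" => ILForm.box
prefix:70 "◇" => ILForm.dia
prefix:70 "∼" => ILForm.neg

/-- Propositional evaluation of a formula, treating boxed and ▷-formulas
(and variables) as atoms evaluated by `g`.  A formula is an instance of a
propositional tautology iff it evaluates to `true` under every such `g`. -/
def ILForm.evalProp (g : ILForm → Bool) : ILForm → Bool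
  | .bot => false
  | .impl a b => !(ILForm.evalProp g a) || ILForm.evalProp g b
  | f => g f

/-- Hilbert-style provability in the interpretability logic IL extended with
an additional set `Ax` of axioms. -/
inductive ILProv (Ax : Set ILForm) : ILForm → Prop
  | ax {A : ILForm} : A ∈ Ax → ILProv Ax A
  | taut {A : ILForm} : (∀ g : ILForm → Bool, A.evalProp g = true) → ILProv Ax A
  | L1 (A B : ILForm) : ILProv Ax ((□(A ⟹ B)) ⟹ ((□A) ⟹ (□B)))
  | L2 (A : ILForm) : ILProv Ax ((□A) ⟹ (□□A))
  | L3 (A : ILForm) : ILProv Ax ((□((□A) ⟹ A)) ⟹ (□A))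
  | J1 (A B : ILForm) : ILProv Ax ((□(A ⟹ B)) ⟹ (A ▷ B))
  | J2 (A B C : ILForm) : ILProv Ax (((A ▷ B) ⋀ (B ▷ C)) ⟹ (A ▷ C))
  | J3 (A B C : ILForm) : ILProv Ax (((A ▷ C) ⋀ (B ▷ C)) ⟹ ((A ⋁ B) ▷ C))
  | J4 (A B : ILForm) : ILProv Ax ((A ▷ B) ⟹ ((◇A) ⟹ (◇B)))
  | J5 (A : ILForm) : ILProv Ax ((◇A) ▷ A)
  | mp {A B : ILForm} : ILProv Ax (A ⟹ B) → ILProv Ax A → ILProv Ax B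
  | nec {A : ILForm} : ILProv Ax A → ILProv Ax (□A)

/-- Substitution of formulas for propositional variables. -/
def ILForm.substVar (σ : ℕ → ILForm) : ILForm → ILForm
  | .var n => σ n
  | .bot => .bot
  | .impl a b => .impl (ILForm.substVar σ a) (ILForm.substVar σ b)
  | .box a => .box (ILForm.substVar σ a)
  | .rhd a b => .rhd (ILForm.substVar σ a) (ILForm.substVar σ b)

/-- All substitution instances of a modal scheme. -/
def instancesOf (A : ILForm) : Set ILForm := {B | ∃ σ : ℕ → ILForm, B = ILForm.substVar σ A}

/-- Helper for simultaneous replacement of subformula occurrences. -/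
def ILForm.hit (ps : List (ILForm × ILForm)) (f : ILForm) : Option ILForm :=
  (ps.find? fun pq => decide (pq.1 = f)).map (·.2)

/-- Simultaneous replacement of (outermost) occurrences of the patterns
`p` by the corresponding `q`, for `(p,q)` in the list `ps`. -/
def ILForm.replL (ps : List (ILForm × ILForm)) : ILForm → ILForm
  | .var n => (ILForm.hit ps (.var n)).getD (.var n)
  | .bot => (ILForm.hit ps .bot).getD .bot
  | .impl a b =>
      (ILForm.hit ps (.impl a b)).getD (.impl (ILForm.replL ps a) (ILForm.replL ps b))
  | .box a => (ILForm.hit ps (.box a)).getD (.box (ILForm.replL ps a))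
  | .rhd a b =>
      (ILForm.hit ps (.rhd a b)).getD (.rhd (ILForm.replL ps a) (ILForm.replL ps b))

/-- The placeholder variables `A_n`, `B_n`, `C_n`, `E_n`. -/
def Av (n : ℕ) : ILForm := .var (4*n)
def Bv (n : ℕ) : ILForm := .var (4*n+1)
def Cv (n : ℕ) : ILForm := .var (4*n+2)
def Ev (n : ℕ) : ILForm := .var (4*n+3)

/-- The slim series `R_n`, defined by the substitutions of the paper:
`R_0 := A_0▷B_0 → ¬(A_0▷¬C_0) ▷ B_0∧□C_0`;
`R_{2n+1} := R_{2n}[¬(A_n▷¬C_n)/¬(A_n▷¬C_n)∧(E_{n+1}▷◇A_{n+1});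
                    B_n∧□C_n/B_n∧□C_n∧(E_{n+1}▷A_{n+1})]`;
`R_{2n+2} := R_{2n+1}[B_n/B_n∧(A_{n+1}▷B_{n+1}); ◇A_{n+1}/¬(A_{n+1}▷¬C_{n+1});
     (E_{n+1}▷A_{n+1})/(E_{n+1}▷A_{n+1})∧(E_{n+1}▷B_{n+1}∧□C_{n+1})]`. -/
def Rser : ℕ → ILForm
  | 0 => (Av 0 ▷ Bv 0) ⟹ ((∼(Av 0 ▷ (∼(Cv 0)))) ▷ ((Bv 0) ⋀ (□(Cv 0))))
  | n+1 =>
    let k := n / 2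
    if n % 2 = 0 then
      ILForm.replL
        [ (∼(Av k ▷ (∼(Cv k))), (∼(Av k ▷ (∼(Cv k)))) ⋀ (Ev (k+1) ▷ (◇(Av (k+1))))),
          ((Bv k) ⋀ (□(Cv k)), ((Bv k) ⋀ (□(Cv k))) ⋀ (Ev (k+1) ▷ Av (k+1))) ]
        (Rser n)
    else
      ILForm.replL
        [ (Bv k, (Bv k) ⋀ (Av (k+1) ▷ Bv (k+1))),
          (◇(Av (k+1)), ∼(Av (k+1) ▷ (∼(Cv (k+1))))),
          (Ev (k+1) ▷ Av (k+1),
            (Ev (k+1) ▷ Av (k+1)) ⋀ (Ev (k+1) ▷ ((Bv (k+1)) ⋀ (□(Cv (k+1)))))) ]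
        (Rser n)

/-- The formulas `X_n` of the well-behaved subhierarchy. -/
def Xt (A B : ℕ → ILForm) : ℕ → ILForm
  | 0 => A 0 ▷ B 0
  | n+1 => A (n+1) ▷ ((B (n+1)) ⋀ (Xt A B n))

/-- The formulas `Y_n` of the well-behaved subhierarchy. -/
def Yt (A C E : ℕ → ILForm) : ℕ → ILForm
  | 0 => ∼(A 0 ▷ (∼(C 0)))
  | n+1 => (∼(A (n+1) ▷ (∼(C (n+1))))) ⋀ (E (n+1) ▷ (Yt A C E n))

/-- The formulas `Z_n` of the well-behaved subhierarchy. -/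
def Zt (A B C E : ℕ → ILForm) : ℕ → ILForm
  | 0 => (B 0) ⋀ (□(C 0))
  | n+1 => (((B (n+1)) ⋀ (Xt A B n)) ⋀ (□(C (n+1)))) ⋀
             ((E (n+1) ▷ A n) ⋀ (E (n+1) ▷ (Zt A B C E n)))

/-- The principles `R̃_n = X_n → Y_n ▷ Z_n`. -/
def Rtilde (A B C E : ℕ → ILForm) (n : ℕ) : ILForm :=
  (Xt A B n) ⟹ ((Yt A C E n) ▷ (Zt A B C E n))

/-- `X_{k-1}`, with the convention `X_{-1} = ⊤`. -/
def Xminus (A B : ℕ → ILForm) : ℕ → ILForm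
  | 0 => ILForm.top
  | n+1 => Xt A B n

/-- `A_{k-1}`, with the convention `A_{-1} = ⊤`. -/
def Aminus (A : ℕ → ILForm) : ℕ → ILForm
  | 0 => ILForm.top
  | n+1 => A n

/-- `Z_{k-1}`, with the convention `Z_{-1} = ⊤`. -/
def Zminus (A B C E : ℕ → ILForm) : ℕ → ILForm
  | 0 => ILForm.top
  | n+1 => Zt A B C E n

/-- Veltman frames. -/
structure Veltman where
  W : Type
  ne : Nonempty W
  R : W → W → Prop
  S : W → W → W → Prop
  R_trans : ∀ {x y z}, R x y → R y z → R x z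
  R_cwf : WellFounded (fun x y => R y x)
  S_dom : ∀ {x y z}, S x y z → R x y ∧ R x z
  S_refl : ∀ {x y}, R x y → S x y y
  S_trans : ∀ {x y z u}, S x y z → S x z u → S x y u
  R_sub_S : ∀ {x y z}, R x y → R y z → S x y z

/-- Forcing in a Veltman model. -/
def force (F : Veltman) (V : ℕ → F.W → Prop) : ILForm → F.W → Prop
  | .var n => fun w => V n w
  | .bot => fun _ => False
  | .impl a b => fun w => force F V a w → force F V b w
  | .box a => fun w => ∀ v, F.R w v → force F V a v
  | .rhd a b => fun w => ∀ v, F.R w v → force F V a v →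
      ∃ u, F.S w v u ∧ force F V b u

/-- A formula is valid on a frame if it is forced at every world under every valuation. -/
def valid (F : Veltman) (A : ILForm) : Prop := ∀ (V : ℕ → F.W → Prop) (w : F.W), force F V A w

/-- The `C`-assuring successor relation `x R^C_⊩ y`. -/
def RC (F : Veltman) (V : ℕ → F.W → Prop) (C : ILForm) (x y : F.W) : Prop :=
  F.R x y ∧ force F V C y ∧ ∀ z, F.S x y z → force F V C z

/-- The ternary relations `G_n` on a Veltman frame. -/
def G (F : Veltman) : ℕ → F.W → F.W → F.W → Prop
  | 0 => fun x y z => ∀ u, F.R z u → F.S x y u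
  | n+1 => fun x y z => ∀ u, F.R z u → F.S x y u ∧ ∀ v, F.S x u v → G F n z u v

/-- The frame conditions `F_n` of the slim hierarchy. -/
def Fcond (F : Veltman) (n : ℕ) : Prop :=
  ∀ w x y z, F.R w x → F.R x y → F.S w y z → G F n x y z

/-- The quaternary relations `B_n` on a Veltman frame. -/
def Bq (F : Veltman) : ℕ → F.W → F.W → F.W → F.W → Prop
  | 0 => fun x1 x0 y0 y1 => F.R x1 x0 ∧ F.R x0 y0 ∧ F.S x1 y0 y1
  | n+1 => fun x' x0 y0 y' => ∃ xn yn, F.R x' xn ∧ Bq F n xn x0 y0 yn ∧ F.S x' yn y'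

/-- The formulas `U_n` of the broad series (with `U_0 := ⊤`, unused). -/
def Ubr (C : ILForm) (D : ℕ → ILForm) : ℕ → ILForm
  | 0 => ILForm.top
  | 1 => ◇(∼(D 1 ▷ (∼C)))
  | n+2 => ◇(((D (n+1)) ▷ (D (n+2))) ⋀ (Ubr C D (n+1)))

/-- The frame conditions `F^n` of the broad series. -/
def FbroadCond (F : Veltman) (n : ℕ) : Prop :=
  ∀ x1 x0 y0 y1, Bq F n x1 x0 y0 y1 → ∀ u, F.R y1 u → F.S x0 y0 u

/-- The principles `R^n` of the broad series. -/
def Rbroad (A B C : ILForm) (D : ℕ → ILForm) : ℕ → ILForm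
  | 0 => (A ▷ B) ⟹ ((∼(A ▷ (∼C))) ▷ (B ⋀ (□C)))
  | n+1 => (A ▷ B) ⟹ (((Ubr C D (n+1)) ⋀ (D (n+1) ▷ A)) ▷ (B ⋀ (□C)))

/-! ### Auxiliary material for Statement 10 -/

section Stmt10Aux

variable {F : Veltman}

lemma force_conj {V : ℕ → F.W → Prop} {A B : ILForm} {w : F.W} :
    force F V (A ⋀ B) w ↔ force F V A w ∧ force F V B w := by
  show ((force F V A w → (force F V B w → False)) → False) ↔ _
  tauto

/-- Variables of a formula are below `m`. -/
def belowVar (m : ℕ) : ILForm → Prop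
  | .var n => n < m
  | .bot => True
  | .impl a b => belowVar m a ∧ belowVar m b
  | .box a => belowVar m a
  | .rhd a b => belowVar m a ∧ belowVar m b

lemma force_ext {m : ℕ} {V V' : ℕ → F.W → Prop} (h : ∀ n, n < m → V n = V' n) :
    ∀ (A : ILForm), belowVar m A → ∀ w, (force F V A w ↔ force F V' A w) := by
  intro A
  induction A with
  | var n => intro hb w; show V n w ↔ V' n w; rw [h n hb]
  | bot => intro _ w; exact Iff.rfl
  | impl a b iha ihb =>
      intro hb w
      show (force F V a w → force F V b w) ↔ (force F V' a w → force F V' b w)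
      rw [iha hb.1 w, ihb hb.2 w]
  | box a iha =>
      intro hb w
      show (∀ v, F.R w v → force F V a v) ↔ _
      exact forall_congr' fun v => imp_congr Iff.rfl (iha hb v)
  | rhd a b iha ihb =>
      intro hb w
      show (∀ v, F.R w v → force F V a v → ∃ u, F.S w v u ∧ force F V b u) ↔ _
      refine forall_congr' fun v => imp_congr Iff.rfl (imp_congr (iha hb.1 v) ?_)
      exact exists_congr fun u => and_congr Iff.rfl (ihb hb.2 u)

lemma belowVar_mono {m m' : ℕ} (h : m ≤ m') : ∀ A, belowVar m A → belowVar m' A := by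
  intro A
  induction A with
  | var n => exact fun hb => lt_of_lt_of_le hb h
  | bot => exact fun _ => trivial
  | impl a b iha ihb => exact fun hb => ⟨iha hb.1, ihb hb.2⟩
  | box a iha => exact fun hb => iha hb
  | rhd a b iha ihb => exact fun hb => ⟨iha hb.1, ihb hb.2⟩

lemma belowVar_conj {m : ℕ} {A B : ILForm} (hA : belowVar m A) (hB : belowVar m B) :
    belowVar m (A ⋀ B) :=
  ⟨⟨hA, hB, trivial⟩, trivial⟩

lemma belowVar_Xt : ∀ j, belowVar (4*j+4) (Xt Av Bv j) := by
  intro j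
  induction j with
  | zero => exact ⟨by show 4*0 < 4*0+4; omega, by show 4*0+1 < 4*0+4; omega⟩
  | succ i ih =>
      exact ⟨by show 4*(i+1) < 4*(i+1)+4; omega,
        belowVar_conj (by show 4*(i+1)+1 < 4*(i+1)+4; omega)
          (belowVar_mono (by omega) _ ih)⟩

lemma belowVar_Yt : ∀ j, belowVar (4*j+4) (Yt Av Cv Ev j) := by
  intro j
  induction j with
  | zero =>
      exact ⟨⟨by show 4*0 < 4*0+4; omega, ⟨by show 4*0+2 < 4*0+4; omega, trivial⟩⟩, trivial⟩
  | succ i ih =>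
      refine belowVar_conj ⟨⟨?_, ?_, trivial⟩, trivial⟩ ⟨?_, belowVar_mono (by omega) _ ih⟩
      · show 4*(i+1) < 4*(i+1)+4; omega
      · show 4*(i+1)+2 < 4*(i+1)+4; omega
      · show 4*(i+1)+3 < 4*(i+1)+4; omega

lemma belowVar_Zt : ∀ j, belowVar (4*j+4) (Zt Av Bv Cv Ev j) := by
  intro j
  induction j with
  | zero =>
      exact belowVar_conj (by show 4*0+1 < 4*0+4; omega) (by show 4*0+2 < 4*0+4; omega)
  | succ i ih =>
      refine belowVar_conj (belowVar_conj (belowVar_conj ?_ ?_) ?_)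
        (belowVar_conj ⟨?_, ?_⟩ ⟨?_, belowVar_mono (by omega) _ ih⟩)
      · show 4*(i+1)+1 < 4*(i+1)+4; omega
      · exact belowVar_mono (by omega) _ (belowVar_Xt i)
      · show 4*(i+1)+2 < 4*(i+1)+4; omega
      · show 4*(i+1)+3 < 4*(i+1)+4; omega
      · show 4*i < 4*(i+1)+4; omega
      · show 4*(i+1)+3 < 4*(i+1)+4; omega

lemma belowVar_Xminus : ∀ j, belowVar (4*j+4) (Xminus Av Bv j) := by
  intro j
  cases j with
  | zero => exact ⟨trivial, trivial⟩
  | succ i => exact belowVar_mono (by omega) _ (belowVar_Xt i)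

/-- Build forcing of `Xt` from its components. -/
lemma Xt_force {V : ℕ → F.W → Prop} {j : ℕ} {c : F.W}
    (h : ∀ t, F.R c t → V (4*j) t →
      ∃ s, F.S c t s ∧ V (4*j+1) s ∧ force F V (Xminus Av Bv j) s) :
    force F V (Xt Av Bv j) c := by
  cases j with
  | zero =>
      intro t hrt hat
      obtain ⟨s, h1, h2, _⟩ := h t hrt hat
      exact ⟨s, h1, h2⟩
  | succ i =>
      intro t hrt hat
      obtain ⟨s, h1, h2, h3⟩ := h t hrt hat
      exact ⟨s, h1, force_conj.2 ⟨h2, h3⟩⟩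

/-- `Xt` is vacuously forced when `A_j` is empty. -/
lemma Xt_vac {V : ℕ → F.W → Prop} {j : ℕ} {w : F.W} (h : ∀ t, ¬ V (4*j) t) :
    force F V (Xt Av Bv j) w := by
  cases j with
  | zero => exact fun t _ hat => absurd hat (h t)
  | succ i => exact fun t _ hat => absurd hat (h t)

lemma Xminus_vac {V : ℕ → F.W → Prop} {j : ℕ} {w : F.W}
    (h : ∀ i t, 4*i < 4*j → ¬ V (4*i) t) :
    force F V (Xminus Av Bv j) w := by
  cases j with
  | zero => exact fun hb => hb
  | succ i => exact Xt_vac (fun t => h i t (by omega))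

/-- Build forcing of `Yt (j+1)` from its components. -/
lemma Yt_force' {V : ℕ → F.W → Prop} {j : ℕ} {a b : F.W}
    (hab : F.R a b) (h2 : V (4*(j+1)) b) (h3 : ∀ s, F.S a b s → V (4*(j+1)+2) s)
    (h4 : ∀ t, F.R a t → V (4*(j+1)+3) t → ∃ s, F.S a t s ∧ force F V (Yt Av Cv Ev j) s) :
    force F V (Yt Av Cv Ev (j+1)) a := by
  refine force_conj.2 ⟨?_, ?_⟩
  · intro hcon
    obtain ⟨s, hs1, hs2⟩ := hcon b hab h2
    exact hs2 (h3 s hs1)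
  · exact h4

/-- Build forcing of `Yt` when `E_j` is empty. -/
lemma Yt_force {V : ℕ → F.W → Prop} {j : ℕ} {a b : F.W}
    (hab : F.R a b) (h2 : V (4*j) b) (h3 : ∀ s, F.S a b s → V (4*j+2) s)
    (h4 : ∀ t, ¬ V (4*j+3) t) :
    force F V (Yt Av Cv Ev j) a := by
  cases j with
  | zero =>
      intro hcon
      obtain ⟨s, hs1, hs2⟩ := hcon b hab h2
      exact hs2 (h3 s hs1)
  | succ i =>
      exact Yt_force' hab h2 h3 (fun t _ het => absurd het (h4 t))

/-- The `B_j` component of `Zt`. -/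
lemma Zt_B {V : ℕ → F.W → Prop} {j : ℕ} {s : F.W}
    (h : force F V (Zt Av Bv Cv Ev j) s) : V (4*j+1) s := by
  cases j with
  | zero => exact (force_conj.1 h).1
  | succ i => exact (force_conj.1 (force_conj.1 (force_conj.1 h).1).1).1

end Stmt10Aux

section Stmt10Main

/-- Soundness core lemma: from `X_k` at `z`, `Y_k` at `v` and `G_{2k+1} z u v`,
we find `S_z`-successors of `u` forcing `A_k` and `Z_k`. -/
lemma Lsound (F : Veltman) :
    ∀ (k : ℕ) (V : ℕ → F.W → Prop) (z u v : F.W),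
      force F V (Xt Av Bv k) z → force F V (Yt Av Cv Ev k) v →
      G F (2*k+1) z u v →
      (∃ a, F.S z u a ∧ V (4*k) a) ∧
      (∃ z', F.S z u z' ∧ force F V (Zt Av Bv Cv Ev k) z') := by
  intro k
  induction k with
  | zero =>
      intro V z u v hX hY hG
      have hy : ∃ b, F.R v b ∧ V (4*0) b ∧ ∀ s, F.S v b s → V (4*0+2) s := by
        by_contra hno
        push_neg at hno
        refine hY (fun t hrt hat => ?_)
        obtain ⟨s, hs1, hs2⟩ := hno t hrt hat
        exact ⟨s, hs1, fun hc => hs2 hc⟩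
      obtain ⟨b, hvb, hA0, hass⟩ := hy
      obtain ⟨hSzub, h2⟩ := hG b hvb
      have hRzb : F.R z b := (F.S_dom hSzub).2
      obtain ⟨z', hSzbz', hBz'⟩ := hX b hRzb hA0
      refine ⟨⟨b, hSzub, hA0⟩, ⟨z', F.S_trans hSzub hSzbz', ?_⟩⟩
      refine force_conj.2 ⟨hBz', ?_⟩
      intro t hrt
      exact hass t (h2 z' hSzbz' t hrt)
  | succ k ih =>
      intro V z u v hX hY hG
      obtain ⟨hY1, hY2⟩ := force_conj.1 hY
      have hy : ∃ b, F.R v b ∧ V (4*(k+1)) b ∧ ∀ s, F.S v b s → V (4*(k+1)+2) s := by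
        by_contra hno
        push_neg at hno
        refine hY1 (fun t hrt hat => ?_)
        obtain ⟨s, hs1, hs2⟩ := hno t hrt hat
        exact ⟨s, hs1, fun hc => hs2 hc⟩
      obtain ⟨b, hvb, hAb, hass⟩ := hy
      have hG' : G F (2*k+1+1+1) z u v := by
        have e : 2*(k+1)+1 = 2*k+1+1+1 := by ring
        rw [e] at hG; exact hG
      obtain ⟨hSzub, h2⟩ := hG' b hvb
      have hRzb : F.R z b := (F.S_dom hSzub).2
      obtain ⟨z', hSzbz', hBX⟩ := hX b hRzb hAb
      have hXz' : force F V (Xt Av Bv k) z' := (force_conj.1 hBX).2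
      have hG2 : G F (2*k+1+1) v b z' := h2 z' hSzbz'
      refine ⟨⟨b, hSzub, hAb⟩, ⟨z', F.S_trans hSzub hSzbz', ?_⟩⟩
      refine force_conj.2 ⟨force_conj.2 ⟨hBX, ?_⟩, force_conj.2 ⟨?_, ?_⟩⟩
      · intro t hrt
        exact hass t (hG2 t hrt).1
      · intro t hrt het
        have hSvbt : F.S v b t := (hG2 t hrt).1
        obtain ⟨s, hSvts, hYs⟩ := hY2 t (F.S_dom hSvbt).2 het
        obtain ⟨⟨a, ha1, ha2⟩, -⟩ := ih V z' t s hXz' hYs ((hG2 t hrt).2 s hSvts)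
        exact ⟨a, ha1, ha2⟩
      · intro t hrt het
        have hSvbt : F.S v b t := (hG2 t hrt).1
        obtain ⟨s, hSvts, hYs⟩ := hY2 t (F.S_dom hSvbt).2 het
        obtain ⟨-, ⟨z₃, hz₃1, hz₃2⟩⟩ := ih V z' t s hXz' hYs ((hG2 t hrt).2 s hSvts)
        exact ⟨z₃, hz₃1, hz₃2⟩

end Stmt10Main

section Stmt10Key

/-- The context predicate used in the frame-definability direction: any valuation
making `Y_j` true at `a`, `X_{j-1}` true at `c`, with `A_j = {b}` and `B_j = {c}`,
forces `Z_j` at `c`. -/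
def CtxP (F : Veltman) (j : ℕ) (a b c : F.W) : Prop :=
  ∀ V : ℕ → F.W → Prop,
    force F V (Yt Av Cv Ev j) a →
    force F V (Xminus Av Bv j) c →
    (∀ t, V (4*j) t ↔ t = b) →
    (∀ t, V (4*j+1) t ↔ t = c) →
    force F V (Zt Av Bv Cv Ev j) c

lemma key (F : Veltman) :
    ∀ (j : ℕ) (a b c : F.W), F.R a b → CtxP F j a b c → G F (2*j) a b c := by
  intro j
  induction j with
  | zero =>
      intro a b c hab hctx
      set V₀ : ℕ → F.W → Prop := fun n t =>
        (n = 4*0 ∧ t = b) ∨ (n = 4*0+1 ∧ t = c) ∨ (n = 4*0+2 ∧ F.S a b t) with hV₀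
      have hY : force F V₀ (Yt Av Cv Ev 0) a :=
        Yt_force hab (Or.inl ⟨rfl, rfl⟩) (fun s hs => Or.inr (Or.inr ⟨rfl, hs⟩))
          (fun t h => by rcases h with ⟨h1, -⟩ | ⟨h1, -⟩ | ⟨h1, -⟩ <;> omega)
      have hXm : force F V₀ (Xminus Av Bv 0) c := fun h => h
      have hA : ∀ t, V₀ (4*0) t ↔ t = b := by
        intro t
        constructor
        · rintro (⟨-, h⟩ | ⟨h1, -⟩ | ⟨h1, -⟩) <;> first | assumption | omega
        · intro h; exact Or.inl ⟨rfl, h⟩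
      have hB : ∀ t, V₀ (4*0+1) t ↔ t = c := by
        intro t
        constructor
        · rintro (⟨h1, -⟩ | ⟨-, h⟩ | ⟨h1, -⟩) <;> first | assumption | omega
        · intro h; exact Or.inr (Or.inl ⟨rfl, h⟩)
      have hZ := hctx V₀ hY hXm hA hB
      intro t hrt
      have hc := (force_conj.1 hZ).2 t hrt
      rcases hc with ⟨h1, -⟩ | ⟨h1, -⟩ | ⟨-, h2⟩
      · omega
      · omega
      · exact h2
  | succ j ih =>
      intro a b c hab hctx
      -- (α) : every R-successor of c is an S_a-successor of b
      have halpha : ∀ t, F.R c t → F.S a b t := by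
        set V₀ : ℕ → F.W → Prop := fun n t =>
          (n = 4*(j+1) ∧ t = b) ∨ (n = 4*(j+1)+1 ∧ t = c) ∨ (n = 4*(j+1)+2 ∧ F.S a b t)
          with hV₀
        have hY : force F V₀ (Yt Av Cv Ev (j+1)) a :=
          Yt_force hab (Or.inl ⟨rfl, rfl⟩) (fun s hs => Or.inr (Or.inr ⟨rfl, hs⟩))
            (fun t h => by rcases h with ⟨h1, -⟩ | ⟨h1, -⟩ | ⟨h1, -⟩ <;> omega)
        have hXm : force F V₀ (Xminus Av Bv (j+1)) c :=
          Xt_vac (fun t h => by rcases h with ⟨h1, -⟩ | ⟨h1, -⟩ | ⟨h1, -⟩ <;> omega)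
        have hA : ∀ t, V₀ (4*(j+1)) t ↔ t = b := by
          intro t
          constructor
          · rintro (⟨-, h⟩ | ⟨h1, -⟩ | ⟨h1, -⟩) <;> first | assumption | omega
          · intro h; exact Or.inl ⟨rfl, h⟩
        have hB : ∀ t, V₀ (4*(j+1)+1) t ↔ t = c := by
          intro t
          constructor
          · rintro (⟨h1, -⟩ | ⟨-, h⟩ | ⟨h1, -⟩) <;> first | assumption | omega
          · intro h; exact Or.inr (Or.inl ⟨rfl, h⟩)
        have hZ := hctx V₀ hY hXm hA hB
        intro t hrt
        have hc := (force_conj.1 (force_conj.1 hZ).1).2 t hrt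
        rcases hc with ⟨h1, -⟩ | ⟨h1, -⟩ | ⟨-, h2⟩
        · omega
        · omega
        · exact h2
      -- (β) : the odd-level S-facts
      have hbeta : ∀ u v u', F.R c u → F.S a u v → F.R v u' → F.S c u u' := by
        intro u v u' hcu hauv hvu'
        set V₁ : ℕ → F.W → Prop := fun n t =>
          (n = 4*(j+1) ∧ t = b) ∨ (n = 4*(j+1)+1 ∧ t = c) ∨ (n = 4*(j+1)+2 ∧ F.S a b t) ∨
          (n = 4*(j+1)+3 ∧ t = u) ∨ (n = 4*j ∧ t = u') ∨ (n = 4*j+1) ∨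
          (n = 4*j+2 ∧ F.S v u' t) with hV₁
        have hYj : force F V₁ (Yt Av Cv Ev j) v :=
          Yt_force hvu' (Or.inr (Or.inr (Or.inr (Or.inr (Or.inl ⟨rfl, rfl⟩)))))
            (fun s hs => Or.inr (Or.inr (Or.inr (Or.inr (Or.inr (Or.inr ⟨rfl, hs⟩))))))
            (fun t h => by
              rcases h with ⟨h1,-⟩|⟨h1,-⟩|⟨h1,-⟩|⟨h1,-⟩|⟨h1,-⟩|h1|⟨h1,-⟩ <;> omega)
        have hY : force F V₁ (Yt Av Cv Ev (j+1)) a := by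
          refine Yt_force' hab (Or.inl ⟨rfl, rfl⟩)
            (fun s hs => Or.inr (Or.inr (Or.inl ⟨rfl, hs⟩))) ?_
          intro t _ het
          have ht : t = u := by
            rcases het with ⟨h1,-⟩|⟨h1,-⟩|⟨h1,-⟩|⟨-,h⟩|⟨h1,-⟩|h1|⟨h1,-⟩
            · omega
            · omega
            · omega
            · exact h
            · omega
            · omega
            · omega
          subst ht
          exact ⟨v, hauv, hYj⟩
        have hXm : force F V₁ (Xminus Av Bv (j+1)) c := by
          show force F V₁ (Xt Av Bv j) c
          refine Xt_force ?_
          intro t hrt hat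
          have ht : t = u' := by
            rcases hat with ⟨h1,-⟩|⟨h1,-⟩|⟨h1,-⟩|⟨h1,-⟩|⟨-,h⟩|h1|⟨h1,-⟩
            · omega
            · omega
            · omega
            · omega
            · exact h
            · omega
            · omega
          subst ht
          refine ⟨t, F.S_refl hrt, Or.inr (Or.inr (Or.inr (Or.inr (Or.inr (Or.inl rfl))))), ?_⟩
          refine Xminus_vac (fun i s hi h => ?_)
          rcases h with ⟨h1,-⟩|⟨h1,-⟩|⟨h1,-⟩|⟨h1,-⟩|⟨h1,-⟩|h1|⟨h1,-⟩ <;> omega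
        have hA : ∀ t, V₁ (4*(j+1)) t ↔ t = b := by
          intro t
          constructor
          · rintro (⟨-,h⟩|⟨h1,-⟩|⟨h1,-⟩|⟨h1,-⟩|⟨h1,-⟩|h1|⟨h1,-⟩) <;>
              first | assumption | omega
          · intro h; exact Or.inl ⟨rfl, h⟩
        have hB : ∀ t, V₁ (4*(j+1)+1) t ↔ t = c := by
          intro t
          constructor
          · rintro (⟨h1,-⟩|⟨-,h⟩|⟨h1,-⟩|⟨h1,-⟩|⟨h1,-⟩|h1|⟨h1,-⟩) <;>
              first | assumption | omega
          · intro h; exact Or.inr (Or.inl ⟨rfl, h⟩)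
        have hZ := hctx V₁ hY hXm hA hB
        have hEA := (force_conj.1 (force_conj.1 hZ).2).1
        obtain ⟨s, hs1, hs2⟩ := hEA u hcu (Or.inr (Or.inr (Or.inr (Or.inl ⟨rfl, rfl⟩))))
        have hs : s = u' := by
          rcases hs2 with ⟨h1,-⟩|⟨h1,-⟩|⟨h1,-⟩|⟨h1,-⟩|⟨-,h⟩|h1|⟨h1,-⟩
          · omega
          · omega
          · omega
          · omega
          · exact h
          · omega
          · omega
        exact hs ▸ hs1
      -- (γ) : the recursive step
      have hgamma : ∀ u v u' v', F.R c u → F.S a u v → F.R v u' → F.S c u' v' →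
          G F (2*j) v u' v' := by
        intro u v u' v' hcu hauv hvu' hcv'
        refine ih v u' v' hvu' ?_
        intro V hYv hXv' hAv hBv
        set V' : ℕ → F.W → Prop := fun n t =>
          if n = 4*(j+1) then t = b else if n = 4*(j+1)+1 then t = c
          else if n = 4*(j+1)+2 then F.S a b t else if n = 4*(j+1)+3 then t = u
          else V n t with hV'
        have hagree : ∀ n, n < 4*j+4 → V n = V' n := by
          intro n hn
          funext t
          show V n t = (if n = 4*(j+1) then t = b else if n = 4*(j+1)+1 then t = c
            else if n = 4*(j+1)+2 then F.S a b t else if n = 4*(j+1)+3 then t = u else V n t)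
          rw [if_neg (by omega), if_neg (by omega), if_neg (by omega), if_neg (by omega)]
        have hYv' : force F V' (Yt Av Cv Ev j) v :=
          (force_ext hagree _ (belowVar_Yt j) v).1 hYv
        have hY : force F V' (Yt Av Cv Ev (j+1)) a := by
          refine Yt_force' hab (by show (if _ then _ else _ : Prop); rw [if_pos rfl]) ?_ ?_
          · intro s hs
            show (if _ then _ else _ : Prop)
            rw [if_neg (by omega), if_neg (by omega), if_pos rfl]
            exact hs
          · intro t _ het
            have ht : t = u := by
              revert het
              show (if _ then _ else _ : Prop) → _
              rw [if_neg (by omega), if_neg (by omega), if_neg (by omega), if_pos rfl]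
              exact id
            subst ht
            exact ⟨v, hauv, hYv'⟩
        have hXm : force F V' (Xminus Av Bv (j+1)) c := by
          show force F V' (Xt Av Bv j) c
          refine Xt_force ?_
          intro t hrt hat
          have ht : t = u' := by
            refine (hAv t).1 ?_
            have : V' (4*j) t := hat
            rwa [← hagree (4*j) (by omega)] at this
          subst ht
          refine ⟨v', hcv', ?_, ?_⟩
          · show V' (4*j+1) v'
            rw [← hagree (4*j+1) (by omega)]
            exact (hBv v').2 rfl
          · exact (force_ext hagree _ (belowVar_Xminus j) v').1 hXv'
        have hA : ∀ t, V' (4*(j+1)) t ↔ t = b := by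
          intro t
          show (if _ then _ else _ : Prop) ↔ _
          rw [if_pos rfl]
        have hB : ∀ t, V' (4*(j+1)+1) t ↔ t = c := by
          intro t
          show (if _ then _ else _ : Prop) ↔ _
          rw [if_neg (by omega), if_pos rfl]
        have hZ := hctx V' hY hXm hA hB
        have hEZ := (force_conj.1 (force_conj.1 hZ).2).2
        obtain ⟨s, hs1, hs2⟩ := hEZ u hcu (by
          show (if _ then _ else _ : Prop)
          rw [if_neg (by omega), if_neg (by omega), if_neg (by omega), if_pos rfl])
        have hsB : V' (4*j+1) s := Zt_B hs2
        have hs : s = v' := by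
          refine (hBv s).1 ?_
          rwa [← hagree (4*j+1) (by omega)] at hsB
        subst hs
        exact (force_ext hagree _ (belowVar_Zt j) s).2 hs2
      -- assemble
      have e : 2*(j+1) = 2*j+1+1 := by ring
      rw [e]
      intro u hcu
      refine ⟨halpha u hcu, ?_⟩
      intro v hauv u' hvu'
      exact ⟨hbeta u v u' hcu hauv hvu', fun v' hcv' => hgamma u v u' v' hcu hauv hvu' hcv'⟩

end Stmt10Key

/-- a Veltman frame satisfies `F_{2k}` iff it validates the schema
`R̃_k = X_k → Y_k ▷ Z_k` under all valuations (with the propositional letters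
being the distinct variables `Av, Bv, Cv, Ev`). -/
theorem stmt10 (F : Veltman) (k : ℕ) :
    Fcond F (2*k) ↔ valid F (Rtilde Av Bv Cv Ev k) := by
  constructor
  · intro hF V w
    intro hX x hwx hY
    have hG : G F (2*k+1) w x x := by
      intro u' hru'
      exact ⟨F.R_sub_S hwx hru', fun v' hS => hF w x u' v' hwx hru' hS⟩
    obtain ⟨-, z', h1, h2⟩ := Lsound F k V w x x hX hY hG
    exact ⟨z', h1, h2⟩
  · intro hval w x y z hwx hxy hyz
    refine key F k x y z hxy ?_
    intro V hY hXm hA hB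
    have hXw : force F V (Xt Av Bv k) w := by
      refine Xt_force ?_
      intro t hrt hat
      have ht : t = y := (hA t).1 hat
      subst ht
      exact ⟨z, hyz, (hB z).2 rfl, hXm⟩
    obtain ⟨z', h1, h2⟩ := hval V w hXw x hwx hY
    have hz : z' = z := (hB z').1 (Zt_B h2)
    rw [hz] at h2
    exact h2
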